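/- The Hartogs triangle Ω := {(z,w) ∈ ℂ² : |z| < |w| < 1} is not P-hyperconvex. -/

import Mathlib

open MeasureTheory Metric Set Filter

noncomputable section

/-- The positive part of an extended real number, as an element of `ℝ≥0∞`. -/
def erealPos (x : EReal) : ENNReal := if x = ⊤ then ⊤ else ENNReal.ofReal x.toReal

/-- The integral of an extended-real-valued function `u` against a measure `μ`,
defined as the difference of the (unsigned) lower integrals of the positive and
negative parts of `u`. -/
def erealIntegral {α : Type*} [MeasurableSpace α] (μ : Measure α) (u : α → EReal) : EReal :=
  ((∫⁻ a, erealPos (u a) ∂μ : ENNReal) : EReal) - ((∫⁻ a, erealPos (-(u a)) ∂μ : ENNReal) : EReal)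

/-- The normalized "angle" measure on `(0, 2π]`, used to express averages over circles. -/
def circleAngleMeasure : Measure ℝ :=
  (ENNReal.ofReal (2 * Real.pi))⁻¹ • volume.restrict (Set.Ioc 0 (2 * Real.pi))

/-- A function `u` with values in `[-∞, ∞)` is plurisubharmonic on an open set
`U ⊆ ℂⁿ` if it is upper semicontinuous on `U`, takes no value `+∞` on `U`, and
satisfies the sub-mean-value inequality on every closed disc of every complex line
contained in `U`. -/
def PshOn {n : ℕ} (u : (Fin n → ℂ) → EReal) (U : Set (Fin n → ℂ)) : Prop :=
  UpperSemicontinuousOn u U ∧ (∀ z ∈ U, u z ≠ ⊤) ∧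
  ∀ (a b : Fin n → ℂ) (r : ℝ), 0 < r →
    (∀ w : ℂ, ‖w‖ ≤ r → a + w • b ∈ U) →
    u a ≤ erealIntegral circleAngleMeasure
      (fun θ : ℝ => u (a + ((r : ℝ) * Complex.exp (θ * Complex.I)) • b))

/-- `u : ℂⁿ → ℝ` belongs to `PSH°(X)` (for `X` compact) if there is an open
neighborhood `U ⊇ X` and a continuous plurisubharmonic function `v` on `U`
with `v = u` on `X`. -/
def PshO {n : ℕ} (u : (Fin n → ℂ) → ℝ) (X : Set (Fin n → ℂ)) : Prop :=
  ∃ U : Set (Fin n → ℂ), IsOpen U ∧ X ⊆ U ∧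
    ∃ v : (Fin n → ℂ) → ℝ, ContinuousOn v U ∧ PshOn (fun z => (v z : EReal)) U ∧
      ∀ z ∈ X, u z = v z

/-- The Jensen measures at `z` with respect to the compact set `X`: Borel probability
measures supported in `X` such that `u z ≤ ∫ u dμ` for all `u ∈ PSH°(X)`. -/
def JensenMeasures {n : ℕ} (X : Set (Fin n → ℂ)) (z : Fin n → ℂ) :
    Set (Measure (Fin n → ℂ)) :=
  {μ | IsProbabilityMeasure μ ∧ μ Xᶜ = 0 ∧
    ∀ u : (Fin n → ℂ) → ℝ, PshO u X → u z ≤ ∫ x, u x ∂μ}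

/-- An upper semicontinuous function `u : X → [-∞, ∞)` is plurisubharmonic on the
compact set `X` if `u z ≤ ∫ u dμ` for every `z ∈ X` and every Jensen measure
`μ ∈ J_z(X)`. -/
def PshCompact {n : ℕ} (u : (Fin n → ℂ) → EReal) (X : Set (Fin n → ℂ)) : Prop :=
  UpperSemicontinuousOn u X ∧ (∀ z ∈ X, u z ≠ ⊤) ∧
  ∀ z ∈ X, ∀ μ ∈ JensenMeasures X z, u z ≤ erealIntegral μ u

/-- A (bounded) domain: a bounded, connected, open subset of `ℂⁿ`. -/
def IsBoundedDomain {n : ℕ} (Ω : Set (Fin n → ℂ)) : Prop :=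
  IsOpen Ω ∧ IsConnected Ω ∧ Bornology.IsBounded Ω

/-- The defining property of P-hyperconvexity: a non-constant function
`φ ∈ PSH(Ω̄) ∩ C(Ω̄)` vanishing on `∂Ω`. -/
def PHxExhaustion {n : ℕ} (Ω : Set (Fin n → ℂ)) : Prop :=
  ∃ φ : (Fin n → ℂ) → ℝ,
    PshCompact (fun z => (φ z : EReal)) (closure Ω) ∧ ContinuousOn φ (closure Ω) ∧
    (∃ z ∈ closure Ω, ∃ w ∈ closure Ω, φ z ≠ φ w) ∧
    ∀ z ∈ frontier Ω, φ z = 0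

/-- A bounded domain `Ω ⊂ ℂⁿ` is P-hyperconvex if there is a non-constant
`φ ∈ PSH(Ω̄) ∩ C(Ω̄)` with `φ = 0` on `∂Ω`. -/
def IsPHyperconvex {n : ℕ} (Ω : Set (Fin n → ℂ)) : Prop :=
  IsBoundedDomain Ω ∧ PHxExhaustion Ω

/-- A bounded domain `Ω ⊂ ℂⁿ` is hyperconvex if there is a non-constant
`φ ∈ PSH(Ω) ∩ C(Ω̄)` with `φ = 0` on `∂Ω`. -/
def IsHyperconvex {n : ℕ} (Ω : Set (Fin n → ℂ)) : Prop :=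
  IsBoundedDomain Ω ∧
  ∃ φ : (Fin n → ℂ) → ℝ,
    PshOn (fun z => (φ z : EReal)) Ω ∧ ContinuousOn φ (closure Ω) ∧
    (∃ z ∈ closure Ω, ∃ w ∈ closure Ω, φ z ≠ φ w) ∧
    ∀ z ∈ frontier Ω, φ z = 0

end

/-!
Pushing the normalized angle measure forward along a circle `θ ↦ z + r e^{iθ} b` whose disc lies in
`X` gives a Jensen measure at `z`. Hence a continuous `φ ∈ PSH(X)` satisfies the sub-mean-value
inequality on every analytic disc in `X`, and a maximum of `φ` at the centre of such a disc is also
attained on its boundary circle.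

On the closed Hartogs triangle, a maximum at an interior point `(z, w)` thus spreads along the disc
`{z + ζ e^{i arg z} : |ζ| ≤ |w| - |z|} × {w}` to a boundary point, so `φ ≤ 0`. The origin lies on
`∂Ω`, so `φ(0) = 0 = max φ`; this value spreads along the disc `{0} × 𝔻` and then, from each
`(0, w)`, along the disc `{|z| ≤ |w|} × {w}`, to all of `Ω̄`, so `φ` cannot be non-constant.
-/

instance : IsProbabilityMeasure circleAngleMeasure where
  measure_univ := by
    simp only [circleAngleMeasure, Measure.smul_apply, Measure.restrict_apply MeasurableSet.univ,
      univ_inter, Real.volume_Ioc, sub_zero, smul_eq_mul]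
    exact ENNReal.inv_mul_cancel (by simp [Real.pi_pos]) ENNReal.ofReal_ne_top

lemma Continuous.integrable_circleAngleMeasure {f : ℝ → ℝ} (hf : Continuous f) :
    Integrable f circleAngleMeasure :=
  hf.integrableOn_Ioc.smul_measure (by simp [Real.pi_pos])

lemma erealIntegral_coe {α : Type*} [MeasurableSpace α] {μ : Measure α} {f : α → ℝ}
    (hf : Integrable f μ) :
    erealIntegral μ (fun x => (f x : EReal)) = ((∫ x, f x ∂μ : ℝ) : EReal) := by
  have hpos : ∀ x : ℝ, erealPos (x : EReal) = ENNReal.ofReal x := by simp [erealPos]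
  have hfinite : ∀ g : α → ℝ, Integrable g μ → ∫⁻ x, ENNReal.ofReal (g x) ∂μ ≠ ⊤ := fun g hg =>
    (lt_of_le_of_lt (lintegral_mono fun x => Real.ofReal_le_enorm _) hg.2).ne
  rw [integral_eq_lintegral_pos_part_sub_lintegral_neg_part hf]
  simp only [erealIntegral, ← EReal.coe_neg, hpos]
  lift ∫⁻ x, ENNReal.ofReal (f x) ∂μ to NNReal using hfinite f hf with A
  lift ∫⁻ x, ENNReal.ofReal (-f x) ∂μ to NNReal using hfinite _ hf.neg with B
  rw [EReal.coe_nnreal_eq_coe_real, EReal.coe_nnreal_eq_coe_real, ← EReal.coe_sub]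
  norm_cast

/-- `M - f ≥ 0` has mean `≤ 0`, so it vanishes almost everywhere on `(0, 2π]`, hence at `2π` by
continuity. -/
lemma eq_of_le_of_le_integral_circleAngleMeasure {f : ℝ → ℝ} (hf : Continuous f) {M : ℝ}
    (hle : ∀ θ, f θ ≤ M) (hM : M ≤ ∫ θ, f θ ∂circleAngleMeasure) : f (2 * Real.pi) = M := by
  have hint := hf.integrable_circleAngleMeasure
  have hnonneg : 0 ≤ fun θ => M - f θ := fun θ => sub_nonneg.2 (hle θ)
  have hzero : ∫ θ, (M - f θ) ∂circleAngleMeasure = 0 := by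
    refine le_antisymm ?_ (integral_nonneg hnonneg)
    rw [integral_sub (integrable_const M) hint, integral_const]
    simpa using hM
  have hae := (integral_eq_zero_iff_of_nonneg hnonneg ((integrable_const M).sub hint)).1 hzero
  rw [circleAngleMeasure, Filter.EventuallyEq,
    Measure.ae_ennreal_smul_measure_iff (by simp [ENNReal.mul_eq_top])] at hae
  have := Measure.eqOn_Ioc_of_ae_eq (μ := volume) hae (by fun_prop) continuousOn_const
    (right_mem_Ioc.2 Real.two_pi_pos)
  simp only [Pi.zero_apply, sub_eq_zero] at this
  exact this.symm

section LineCircle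

variable {n : ℕ} {X : Set (Fin n → ℂ)} {z b : Fin n → ℂ} {r : ℝ}

noncomputable def lineCircle (z b : Fin n → ℂ) (r θ : ℝ) : Fin n → ℂ :=
  z + ((r : ℂ) * Complex.exp (θ * Complex.I)) • b

@[fun_prop]
lemma continuous_lineCircle (z b : Fin n → ℂ) (r : ℝ) : Continuous (lineCircle z b r) := by
  unfold lineCircle
  fun_prop

lemma lineCircle_two_pi (z b : Fin n → ℂ) (r : ℝ) :
    lineCircle z b r (2 * Real.pi) = z + (r : ℂ) • b := by
  simp [lineCircle, Complex.exp_two_pi_mul_I]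

lemma lineCircle_mem (hr : 0 ≤ r) (hdisc : ∀ w : ℂ, ‖w‖ ≤ r → z + w • b ∈ X) (θ : ℝ) :
    lineCircle z b r θ ∈ X :=
  hdisc _ <| by simp [Complex.norm_exp_ofReal_mul_I, abs_of_nonneg hr]

lemma map_lineCircle_compl_eq_zero (hX : MeasurableSet X) (hr : 0 ≤ r)
    (hdisc : ∀ w : ℂ, ‖w‖ ≤ r → z + w • b ∈ X) :
    circleAngleMeasure.map (lineCircle z b r) Xᶜ = 0 := by
  have hpre : lineCircle z b r ⁻¹' X = univ := eq_univ_of_forall (lineCircle_mem hr hdisc)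
  rw [Measure.map_apply (continuous_lineCircle z b r).measurable hX.compl, preimage_compl, hpre,
    compl_univ, measure_empty]

lemma ContinuousOn.aestronglyMeasurable_map_lineCircle {g : (Fin n → ℂ) → ℝ}
    (hg : ContinuousOn g X) (hX : MeasurableSet X) (hr : 0 ≤ r)
    (hdisc : ∀ w : ℂ, ‖w‖ ≤ r → z + w • b ∈ X) :
    AEStronglyMeasurable g (circleAngleMeasure.map (lineCircle z b r)) := by
  have hae : ∀ᵐ x ∂circleAngleMeasure.map (lineCircle z b r), x ∈ X :=
    measure_eq_zero_iff_ae_notMem.1 (map_lineCircle_compl_eq_zero hX hr hdisc) |>.mono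
      fun x hx => not_not.1 hx
  rw [← Measure.restrict_eq_self_of_ae_mem hae]
  exact hg.aestronglyMeasurable hX

lemma map_lineCircle_mem_jensenMeasures (hX : MeasurableSet X) (hr : 0 < r)
    (hdisc : ∀ w : ℂ, ‖w‖ ≤ r → z + w • b ∈ X) :
    circleAngleMeasure.map (lineCircle z b r) ∈ JensenMeasures X z := by
  have hcirc := continuous_lineCircle z b r
  refine ⟨Measure.isProbabilityMeasure_map hcirc.aemeasurable,
    map_lineCircle_compl_eq_zero hX hr.le hdisc, fun u ⟨U, hU, hXU, v, hvc, hv, huv⟩ => ?_⟩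
  have hz : z ∈ X := by simpa using hdisc 0 (by simp [hr.le])
  have huc : ContinuousOn u X := (hvc.mono hXU).congr huv
  have hsub : (v z : EReal) ≤ erealIntegral circleAngleMeasure
      (fun θ => (v (lineCircle z b r θ) : EReal)) :=
    hv.2.2 z b r hr fun w hw => hXU (hdisc w hw)
  rw [erealIntegral_coe (f := fun θ => v (lineCircle z b r θ)) ((hvc.comp_continuous hcirc
    fun θ => hXU (lineCircle_mem hr.le hdisc θ)).integrable_circleAngleMeasure)] at hsub
  rw [integral_map hcirc.aemeasurable (huc.aestronglyMeasurable_map_lineCircle hX hr.le hdisc),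
    huv z hz]
  refine (EReal.coe_le_coe_iff.1 hsub).trans_eq (integral_congr_ae (.of_forall fun θ => ?_))
  exact (huv _ (lineCircle_mem hr.le hdisc θ)).symm

lemma PshCompact.le_integral_lineCircle {φ : (Fin n → ℂ) → ℝ}
    (hφ : PshCompact (fun x => (φ x : EReal)) X) (hc : ContinuousOn φ X) (hX : MeasurableSet X)
    (hr : 0 < r) (hdisc : ∀ w : ℂ, ‖w‖ ≤ r → z + w • b ∈ X) :
    φ z ≤ ∫ θ, φ (lineCircle z b r θ) ∂circleAngleMeasure := by
  have hcirc := continuous_lineCircle z b r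
  have hz : z ∈ X := by simpa using hdisc 0 (by simp [hr.le])
  have hmeas := hc.aestronglyMeasurable_map_lineCircle hX hr.le hdisc
  have hint : Integrable φ (circleAngleMeasure.map (lineCircle z b r)) :=
    (integrable_map_measure hmeas hcirc.aemeasurable).2
      (hc.comp_continuous hcirc (lineCircle_mem hr.le hdisc)).integrable_circleAngleMeasure
  have h := hφ.2.2 z hz _ (map_lineCircle_mem_jensenMeasures hX hr hdisc)
  rw [erealIntegral_coe hint, integral_map hcirc.aemeasurable hmeas] at h
  exact EReal.coe_le_coe_iff.1 h

lemma PshCompact.eq_of_isMaxOn {φ : (Fin n → ℂ) → ℝ}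
    (hφ : PshCompact (fun x => (φ x : EReal)) X) (hc : ContinuousOn φ X) (hX : MeasurableSet X)
    (hmax : IsMaxOn φ X z) (hr : 0 < r) (hdisc : ∀ w : ℂ, ‖w‖ ≤ r → z + w • b ∈ X) :
    φ (z + (r : ℂ) • b) = φ z := by
  rw [← lineCircle_two_pi]
  exact eq_of_le_of_le_integral_circleAngleMeasure
    (hc.comp_continuous (continuous_lineCircle z b r) (lineCircle_mem hr.le hdisc))
    (fun θ => hmax (lineCircle_mem hr.le hdisc θ)) (hφ.le_integral_lineCircle hc hX hr hdisc)

end LineCircle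

section Hartogs

open Complex Topology

def hartogsTriangle : Set (Fin 2 → ℂ) := {p | ‖p 0‖ < ‖p 1‖ ∧ ‖p 1‖ < 1}

lemma isOpen_hartogsTriangle : IsOpen hartogsTriangle :=
  (isOpen_lt (continuous_apply 0).norm (continuous_apply 1).norm).inter
    (isOpen_lt (continuous_apply 1).norm continuous_const)

/-- Each point of the closed triangle is reached along the segment from `(0, e^{i arg w}/2)`. -/
lemma closure_hartogsTriangle :
    closure hartogsTriangle = {p | ‖p 0‖ ≤ ‖p 1‖ ∧ ‖p 1‖ ≤ 1} := by
  refine Subset.antisymm (closure_minimal (fun p hp => ⟨hp.1.le, hp.2.le⟩)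
    ((isClosed_le (continuous_apply 0).norm (continuous_apply 1).norm).inter
      (isClosed_le (continuous_apply 1).norm continuous_const)))
    fun p ⟨h01, h11⟩ => ?_
  set u := exp (arg (p 1) * I)
  have hu : ‖u‖ = 1 := norm_exp_ofReal_mul_I _
  have hp1 : p 1 = ‖p 1‖ * u := (norm_mul_exp_arg_mul_I _).symm
  set e : Fin 2 → ℂ := ![0, u / 2]
  have hseg : ∀ t ∈ Ioo (0 : ℝ) 1, AffineMap.lineMap e p t ∈ hartogsTriangle := by
    rintro t ⟨ht0, ht1⟩
    have h1 : (AffineMap.lineMap e p t) 1 = (((1 - t) / 2 + t * ‖p 1‖ : ℝ) : ℂ) * u := by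
      simp only [AffineMap.lineMap_apply_module, Pi.add_apply, Pi.smul_apply, real_smul, e,
        Matrix.cons_val_one, Matrix.cons_val_fin_one]
      push_cast
      linear_combination (t : ℂ) * hp1
    have h0 : (AffineMap.lineMap e p t) 0 = t * p 0 := by
      simp [AffineMap.lineMap_apply_module, e, real_smul]
    have hcoef : 0 ≤ (1 - t) / 2 + t * ‖p 1‖ := by nlinarith [norm_nonneg (p 1)]
    change ‖_‖ < ‖_‖ ∧ ‖_‖ < 1
    rw [h0, h1, norm_mul, norm_mul, hu, Complex.norm_of_nonneg ht0.le, Complex.norm_of_nonneg hcoef]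
    constructor <;> nlinarith
  refine mem_closure_of_tendsto (b := 𝓝[<] (1 : ℝ)) ?_
    (mem_of_superset (Ioo_mem_nhdsLT zero_lt_one) hseg)
  exact (AffineMap.lineMap_continuous.tendsto' 1 p (by simp)).mono_left nhdsWithin_le_nhds

lemma isCompact_closure_hartogsTriangle : IsCompact (closure hartogsTriangle) := by
  refine Metric.isCompact_of_isClosed_isBounded isClosed_closure
    ((isBounded_closedBall (x := 0) (r := 1)).subset ?_)
  rw [closure_hartogsTriangle]
  rintro p ⟨h01, h11⟩
  rw [mem_closedBall_zero_iff, pi_norm_le_iff_of_nonneg zero_le_one, Fin.forall_fin_two]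
  exact ⟨h01.trans h11, h11⟩

lemma mem_frontier_hartogsTriangle {p : Fin 2 → ℂ} :
    p ∈ frontier hartogsTriangle ↔ p ∈ closure hartogsTriangle ∧ p ∉ hartogsTriangle := by
  rw [isOpen_hartogsTriangle.frontier_eq]
  rfl

section Exhaustion

variable {φ : (Fin 2 → ℂ) → ℝ} (hφ : PshCompact (fun x => (φ x : EReal)) (closure hartogsTriangle))
  (hc : ContinuousOn φ (closure hartogsTriangle))
  (h0 : ∀ p ∈ frontier hartogsTriangle, φ p = 0)
include hφ hc h0

lemma PshCompact.nonpos_on_closure_hartogsTriangle :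
    ∀ p ∈ closure hartogsTriangle, φ p ≤ 0 := by
  obtain ⟨p, hp, hmax⟩ :=
    isCompact_closure_hartogsTriangle.exists_isMaxOn ⟨0, by simp [closure_hartogsTriangle]⟩ hc
  suffices φ p = 0 from fun q hq => this ▸ hmax hq
  by_cases hpΩ : p ∈ hartogsTriangle
  swap
  · exact h0 p (mem_frontier_hartogsTriangle.2 ⟨hp, hpΩ⟩)
  set u := exp (arg (p 0) * I)
  have hu : ‖u‖ = 1 := norm_exp_ofReal_mul_I _
  have hr : 0 < ‖p 1‖ - ‖p 0‖ := sub_pos.2 hpΩ.1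
  have hdisc : ∀ w : ℂ, ‖w‖ ≤ ‖p 1‖ - ‖p 0‖ → p + w • ![u, 0] ∈ closure hartogsTriangle := by
    intro w hw
    have hw0 : (p + w • ![u, 0]) 0 = p 0 + w * u := by simp
    have hw1 : (p + w • ![u, 0]) 1 = p 1 := by simp
    rw [closure_hartogsTriangle]
    refine ⟨?_, hw1 ▸ hpΩ.2.le⟩
    rw [hw0, hw1]
    calc ‖p 0 + w * u‖ ≤ ‖p 0‖ + ‖w‖ := by simpa [hu] using norm_add_le (p 0) (w * u)
      _ ≤ ‖p 1‖ := by linarith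
  have hedge : p + ((‖p 1‖ - ‖p 0‖ : ℝ) : ℂ) • ![u, 0] ∉ hartogsTriangle := by
    have hp0 : p 0 = ‖p 0‖ * u := (norm_mul_exp_arg_mul_I _).symm
    have hedge0 : (p + ((‖p 1‖ - ‖p 0‖ : ℝ) : ℂ) • ![u, 0]) 0 = ‖p 1‖ * u := by
      simp only [Pi.add_apply, Pi.smul_apply, Matrix.cons_val_zero, smul_eq_mul]
      push_cast
      linear_combination hp0
    have hedge1 : (p + ((‖p 1‖ - ‖p 0‖ : ℝ) : ℂ) • ![u, 0]) 1 = p 1 := by simp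
    intro h
    have hlt := h.1
    rw [hedge0, hedge1, norm_mul, hu, norm_real, norm_norm, mul_one] at hlt
    exact hlt.false
  rw [← hφ.eq_of_isMaxOn hc isClosed_closure.measurableSet hmax hr hdisc]
  exact h0 _ (mem_frontier_hartogsTriangle.2 ⟨hdisc _ (Complex.norm_of_nonneg hr.le).le, hedge⟩)

lemma PshCompact.eq_zero_on_closure_hartogsTriangle :
    ∀ p ∈ closure hartogsTriangle, φ p = 0 := by
  have hle := hφ.nonpos_on_closure_hartogsTriangle hc h0
  have hspread : ∀ q b, φ q = 0 → (∀ w : ℂ, ‖w‖ ≤ 1 → q + w • b ∈ closure hartogsTriangle) →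
      φ (q + b) = 0 := by
    intro q b hq hdisc
    have hmax : IsMaxOn φ (closure hartogsTriangle) q := fun x hx => hq ▸ hle x hx
    simpa [hq] using hφ.eq_of_isMaxOn hc isClosed_closure.measurableSet hmax one_pos hdisc
  have horigin : φ 0 = 0 := h0 0 (mem_frontier_hartogsTriangle.2
    ⟨by simp [closure_hartogsTriangle], by simp [hartogsTriangle]⟩)
  intro p hp
  by_cases hpΩ : p ∈ hartogsTriangle
  swap
  · exact h0 p (mem_frontier_hartogsTriangle.2 ⟨hp, hpΩ⟩)
  have haxis : φ (0 + ![0, p 1]) = 0 := hspread _ _ horigin fun w hw => by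
    rw [closure_hartogsTriangle]
    refine ⟨by simpa using mul_nonneg (norm_nonneg w) (norm_nonneg (p 1)), ?_⟩
    simpa using mul_le_one₀ hw (norm_nonneg _) hpΩ.2.le
  rw [zero_add] at haxis
  have hfibre : φ (![0, p 1] + ![p 0, 0]) = 0 := hspread _ _ haxis fun w hw => by
    rw [closure_hartogsTriangle]
    refine ⟨?_, by simpa using hpΩ.2.le⟩
    simpa using (mul_le_of_le_one_left (norm_nonneg _) hw).trans hpΩ.1.le
  have hsplit : ![0, p 1] + ![p 0, 0] = p := by
    ext i
    fin_cases i <;> simp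
  rwa [hsplit] at hfibre

end Exhaustion

end Hartogs

/-- The Hartogs triangle is not P-hyperconvex. -/
theorem hartogs_not_phyperconvex :
    ¬ IsPHyperconvex {p : Fin 2 → ℂ |
        ‖p 0‖ < ‖p 1‖ ∧ ‖p 1‖ < 1} := by
  rintro ⟨-, φ, hφ, hc, ⟨p, hp, q, hq, hne⟩, h0⟩
  have hzero := hφ.eq_zero_on_closure_hartogsTriangle hc h0
  exact hne ((hzero p hp).trans (hzero q hq).symm)
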